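/- Every nontrivial normal subgroup of L_n = (ℤ/pℤ)^n ≀ ℤ whose projection to ℤ is nontrivial has finite index in L_n. -/

import Mathlib

open Finsupp Multiplicative

/-- The base group of the lamplighter group `L_n = (ℤ/pℤ)^n ≀ ℤ`: `⊕_ℤ (ℤ/pℤ)^n`. -/
abbrev LampBase (p n : ℕ) := ℤ →₀ (Fin n → ZMod p)

/-- The shift `x^s` on the base group. -/
def lampShift (p n : ℕ) (s : ℤ) : LampBase p n ≃+ LampBase p n :=
  Finsupp.domCongr (Equiv.addRight s)

/-- The shift action of `ℤ` on the (multiplicative) base group. -/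
noncomputable def lampAct (p n : ℕ) :
    Multiplicative ℤ →* MulAut (Multiplicative (LampBase p n)) where
  toFun s := AddEquiv.toMultiplicative (lampShift p n s.toAdd)
  map_one' := by
    ext w
    simp [lampShift, Finsupp.domCongr_apply]
    rfl
  map_mul' s t := by
    ext w
    simp [lampShift, Finsupp.domCongr_apply, MulAut.mul_def, MulEquiv.trans_apply]
    simp [Finsupp.equivMapDomain_apply, Equiv.Perm.mul_def]
    all_goals ring_nf

/-- The lamplighter group `L_n = (ℤ/pℤ)^n ≀ ℤ`, realized as the semidirect
product of the base group `⊕_ℤ (ℤ/pℤ)^n` with `ℤ` acting by the shift. -/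
abbrev Lamp (p n : ℕ) :=
  SemidirectProduct (Multiplicative (LampBase p n)) (Multiplicative ℤ) (lampAct p n)

/-!
If `v ∈ V` projects to `m ≠ 0`, then for every `a` in the abelian base the commutator
`a · (x^m a)⁻¹` lies in `V`. These differences `single j x - single (j + m) x` generate the kernel
of the folding map `⊕_ℤ (ℤ/p)^n → ⊕_{ℤ/m} (ℤ/p)^n`, whose target is finite, so `V` meets the base
in a subgroup of finite index. Its image in `ℤ` is a nonzero subgroup, hence also of finite index,
and the index of a normal subgroup is the product of these two indices.
-/

namespace Finsupp

variable {A : Type*} [AddCommGroup A] {S : AddSubgroup (ℤ →₀ A)} {m : ℤ}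

theorem single_sub_single_add_mul_mem (h : ∀ j x, single j x - single (j + m) x ∈ S)
    (j t : ℤ) (x : A) : single j x - single (j + m * t) x ∈ S := by
  induction t using Int.induction_on with
  | zero => simp
  | succ t ih =>
    have := S.add_mem ih (h (j + m * t) x)
    rwa [sub_add_sub_cancel, add_assoc, ← mul_add_one] at this
  | pred t ih =>
    have := S.sub_mem ih (h (j + m * (-t - 1)) x)
    rwa [show j + m * (-t - 1) + m = j + m * -t by ring, sub_sub_sub_cancel_right] at this

theorem single_sub_single_mem_of_modEq (h : ∀ j x, single j x - single (j + m) x ∈ S)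
    {i j : ℤ} (hij : i ≡ j [ZMOD m]) (x : A) : single i x - single j x ∈ S := by
  obtain ⟨t, ht⟩ := Int.modEq_iff_dvd.mp hij
  have := single_sub_single_add_mul_mem h i t x
  rwa [show i + m * t = j by linarith] at this

theorem sub_mapDomain_mem (h : ∀ j x, single j x - single (j + m) x ∈ S) {f : ℤ → ℤ}
    (hf : ∀ i, f i ≡ i [ZMOD m]) (b : ℤ →₀ A) : b - mapDomain f b ∈ S := by
  induction b using Finsupp.induction with
  | zero => simp
  | single_add j x b _ _ ih =>
    rw [mapDomain_add, mapDomain_single, add_sub_add_comm]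
    exact S.add_mem (single_sub_single_mem_of_modEq h (hf j).symm x) ih

theorem ker_mapDomain_intCast_le (h : ∀ j x, single j x - single (j + m) x ∈ S) :
    (mapDomain.addMonoidHom (Int.cast : ℤ → ZMod m.natAbs) : (ℤ →₀ A) →+ _).ker ≤ S := by
  intro b hb
  rw [AddMonoidHom.mem_ker, mapDomain.addMonoidHom_apply] at hb
  have hcast (i : ℤ) : ((i : ZMod m.natAbs).cast : ℤ) ≡ i [ZMOD m] :=
    Int.modEq_natAbs.mp ((ZMod.intCast_eq_intCast_iff _ _ _).mp (ZMod.intCast_zmod_cast _))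
  have := sub_mapDomain_mem h hcast b
  rwa [show (fun i : ℤ => ((i : ZMod m.natAbs).cast : ℤ)) = ZMod.cast ∘ Int.cast from rfl,
    mapDomain_comp, hb, mapDomain_zero, sub_zero] at this

theorem finiteIndex_of_single_sub_single_add_mem [Finite A] (hm : m ≠ 0)
    (h : ∀ j x, single j x - single (j + m) x ∈ S) : S.FiniteIndex :=
  have : NeZero m.natAbs := ⟨Int.natAbs_ne_zero.mpr hm⟩
  have : Finite (ZMod m.natAbs →₀ A) := Finite.of_equiv _ equivFunOnFinite.symm
  AddSubgroup.finiteIndex_of_le (ker_mapDomain_intCast_le h)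

end Finsupp

theorem SemidirectProduct.inl_mul_inv_aut_mem {N G : Type*} [CommGroup N] [Group G]
    {φ : G →* MulAut N} {V : Subgroup (N ⋊[φ] G)} [V.Normal] {v : N ⋊[φ] G} (hv : v ∈ V)
    (a : N) : inl (a * (φ v.right a)⁻¹) ∈ V := by
  have commutator_eq : inl a * v * (inl a)⁻¹ * v⁻¹ = inl (a * (φ v.right a)⁻¹) := by
    ext <;> simp [mul_right_comm _ v.left]
  rw [← commutator_eq]
  exact V.mul_mem (‹V.Normal›.conj_mem v hv _) (V.inv_mem hv)

theorem Subgroup.index_eq_index_map_mul_relIndex_ker {G Q : Type*} [Group G] [Group Q]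
    {f : G →* Q} (hf : Function.Surjective f) (H : Subgroup G) [H.Normal] :
    H.index = (H.map f).index * H.relIndex f.ker := by
  rw [← relIndex_mul_index (le_sup_left : H ≤ H ⊔ f.ker), relIndex_sup_left, ← comap_map_eq,
    index_comap_of_surjective _ hf, mul_comm]

theorem Subgroup.finiteIndex_of_ne_bot_multiplicativeInt {H : Subgroup (Multiplicative ℤ)}
    (h : H ≠ ⊥) : H.FiniteIndex := by
  obtain ⟨x, hx, hx1⟩ := H.bot_or_exists_ne_one.resolve_left h
  have : (AddSubgroup.zmultiples (toAdd x)).FiniteIndex := ⟨by simpa using hx1⟩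
  have : (toAddSubgroup' H).FiniteIndex :=
    AddSubgroup.finiteIndex_of_le (H := .zmultiples (toAdd x)) (AddSubgroup.zmultiples_le.mpr hx)
  exact ⟨this.index_ne_zero⟩

theorem lampAct_ofAdd_single (p n : ℕ) (s : Multiplicative ℤ) (j : ℤ) (x : Fin n → ZMod p) :
    lampAct p n s (ofAdd (single j x)) = ofAdd (single (j + toAdd s) x) := by
  simp [lampAct, lampShift, Finsupp.domCongr_apply]

theorem stmt_9_general (p n : ℕ) [Fact p.Prime]
    (V : Subgroup (Lamp p n)) [V.Normal]
    (hproj : Subgroup.map SemidirectProduct.rightHom V ≠ ⊥) :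
    V.FiniteIndex := by
  obtain ⟨_, ⟨v, hv, rfl⟩, hv1⟩ :=
    (V.map SemidirectProduct.rightHom).bot_or_exists_ne_one.resolve_left hproj
  have hm : toAdd v.right ≠ 0 := by simpa using hv1
  have hbase : (Subgroup.toAddSubgroup' (V.comap SemidirectProduct.inl)).FiniteIndex :=
    Finsupp.finiteIndex_of_single_sub_single_add_mem hm fun j x => by
      simpa [lampAct_ofAdd_single, sub_eq_add_neg] using
        SemidirectProduct.inl_mul_inv_aut_mem hv (ofAdd (single j x))
  have hquot := Subgroup.finiteIndex_of_ne_bot_multiplicativeInt hproj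
  rw [Subgroup.finiteIndex_iff,
    V.index_eq_index_map_mul_relIndex_ker SemidirectProduct.rightHom_surjective,
    ← SemidirectProduct.range_inl_eq_ker_rightHom, ← Subgroup.index_comap]
  exact mul_ne_zero hquot.index_ne_zero hbase.index_ne_zero

/-- Every normal subgroup of `L_n` with nontrivial projection to `ℤ` has finite index. -/
theorem stmt_9 (p n : ℕ) [Fact p.Prime] (hn : 1 ≤ n)
    (V : Subgroup (Lamp p n)) [V.Normal] (hV : V ≠ ⊥)
    (hproj : Subgroup.map SemidirectProduct.rightHom V ≠ ⊥) :
    V.FiniteIndex :=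
  stmt_9_general p n V hproj
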